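/- Let f : ℂ → ℂ be continuously differentiable (in the real sense) and bounded, and suppose (ð₁f)(z) = 0 for every z ∈ ℂ, i.e. z ↦ (1+|z|²)f(z) is holomorphic on ℂ. Then there exist constants B₋₁, B₀, B₁ ∈ ℂ such that f(z) = (B₋₁ + B₀z + B₁z²)/(1+|z|²) for all z ∈ ℂ. (This is the paper's Eq. (27): a spin-weight-1 function on the sphere annihilated by ð is a linear combination of the three harmonics ₁Y_{1,m}, m = −1, 0, 1; it is applied to Ψ₁⁰, for which the stationary Killing equations give ðΨ₁⁰ = 0.) -/

import Mathlib

open Complex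

/-- The Wirtinger derivative `∂_z f = (1/2)(∂ₓf − i∂_yf)` of `f : ℂ → ℂ`,
viewed as a real-differentiable function on `ℝ²`. -/
noncomputable def wirtD (f : ℂ → ℂ) (z : ℂ) : ℂ :=
  (1 / 2 : ℂ) * (fderiv ℝ f z 1 - Complex.I * fderiv ℝ f z Complex.I)

/-- The conjugate Wirtinger derivative `∂_z̄ f = (1/2)(∂ₓf + i∂_yf)`. -/
noncomputable def wirtDBar (f : ℂ → ℂ) (z : ℂ) : ℂ :=
  (1 / 2 : ℂ) * (fderiv ℝ f z 1 + Complex.I * fderiv ℝ f z Complex.I)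

/-- The spin-weight-`s` Newman–Penrose operator
`(ð_s f)(z) = 2^(−1/2) (1+|z|²)^(1−s) ∂_z̄[(1+|z|²)^s f](z)`. -/
noncomputable def edth (s : ℤ) (f : ℂ → ℂ) (z : ℂ) : ℂ :=
  (Real.sqrt 2 : ℂ)⁻¹ * (1 + ‖z‖ ^ 2 : ℂ) ^ (1 - s) *
    wirtDBar (fun w => (1 + ‖w‖ ^ 2 : ℂ) ^ s * f w) z

/-- The spin-weight-`s` Newman–Penrose operator
`(ð̄_s f)(z) = 2^(−1/2) (1+|z|²)^(1+s) ∂_z[(1+|z|²)^(−s) f](z)`. -/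
noncomputable def edthBar (s : ℤ) (f : ℂ → ℂ) (z : ℂ) : ℂ :=
  (Real.sqrt 2 : ℂ)⁻¹ * (1 + ‖z‖ ^ 2 : ℂ) ^ (1 + s) *
    wirtD (fun w => (1 + ‖w‖ ^ 2 : ℂ) ^ (-s) * f w) z

/-- The representative `Y_k(z) = z^k (1+|z|²)^(−2)` of the spin-weight-2,
`l = 2` spherical harmonic `₂Y_{2,k−2}` in the stereographic chart. -/
noncomputable def Ysph (k : ℕ) (z : ℂ) : ℂ :=
  z ^ k / (1 + ‖z‖ ^ 2 : ℂ) ^ 2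

/-!
The weighted function `g = (1 + |z|²) f` satisfies `∂_z̄ g = 0`, so by the Cauchy–Riemann
equations it is entire, and `|g z| ≤ M (1 + |z|)²`. An entire function of growth
`O((1 + |z|)ⁿ)` is a polynomial of degree at most `n`: its difference quotient
`(g z - g 0) / z` is entire of growth `O((1 + |z|)ⁿ⁻¹)`, and for `n = 0` this is Liouville's
theorem. Hence `g` is a quadratic polynomial.
-/

open Polynomial Metric

section Growth

variable {E : Type*} [NormedAddCommGroup E] [NormedSpace ℂ E] [CompleteSpace E]

theorem differentiable_dslope {g : ℂ → E} (hg : Differentiable ℂ g) (c : ℂ) :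
    Differentiable ℂ (dslope g c) := by
  rw [← differentiableOn_univ] at hg ⊢
  exact (Complex.differentiableOn_dslope Filter.univ_mem).2 hg

theorem Differentiable.exists_norm_dslope_le {g : ℂ → E} (hg : Differentiable ℂ g) {C : ℝ}
    {n : ℕ} (hC : ∀ z, ‖g z‖ ≤ C * (1 + ‖z‖) ^ (n + 1)) :
    ∃ C', ∀ z, ‖dslope g 0 z‖ ≤ C' * (1 + ‖z‖) ^ n := by
  obtain ⟨K, hK⟩ := (isCompact_closedBall (0 : ℂ) 1).exists_bound_of_continuousOn
    (differentiable_dslope hg 0).continuous.continuousOn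
  set D := C + ‖g 0‖
  have hD : 0 ≤ D := by
    have h0 := hC 0
    simp only [norm_zero, add_zero, one_pow, mul_one] at h0
    exact add_nonneg ((norm_nonneg _).trans h0) (norm_nonneg _)
  refine ⟨max K (2 * D), fun z => ?_⟩
  rcases le_or_gt ‖z‖ 1 with hz | hz
  · have hpow : 1 ≤ (1 + ‖z‖) ^ n := one_le_pow₀ (by simp)
    calc ‖dslope g 0 z‖ ≤ K := hK z (by simpa using hz)
      _ ≤ max K (2 * D) * 1 := by simp
      _ ≤ max K (2 * D) * (1 + ‖z‖) ^ n := by gcongr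
  · have hmul : ‖z‖ * ‖dslope g 0 z‖ ≤ D * (1 + ‖z‖) ^ (n + 1) :=
      calc ‖z‖ * ‖dslope g 0 z‖ = ‖g z - g 0‖ := by
            rw [← norm_smul, ← sub_smul_dslope g 0 z, sub_zero]
        _ ≤ ‖g z‖ + ‖g 0‖ := norm_sub_le _ _
        _ ≤ C * (1 + ‖z‖) ^ (n + 1) + ‖g 0‖ * (1 + ‖z‖) ^ (n + 1) := by
            gcongr
            · exact hC z
            · exact le_mul_of_one_le_right (norm_nonneg _) (one_le_pow₀ (by simp))
        _ = D * (1 + ‖z‖) ^ (n + 1) := by ring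
    refine le_of_mul_le_mul_left ?_ (by positivity : 0 < 1 + ‖z‖)
    calc (1 + ‖z‖) * ‖dslope g 0 z‖ ≤ 2 * (‖z‖ * ‖dslope g 0 z‖) := by
          nlinarith [norm_nonneg (dslope g 0 z)]
      _ ≤ 2 * (D * (1 + ‖z‖) ^ (n + 1)) := by gcongr
      _ = (1 + ‖z‖) * (2 * D * (1 + ‖z‖) ^ n) := by ring
      _ ≤ (1 + ‖z‖) * (max K (2 * D) * (1 + ‖z‖) ^ n) := by gcongr; exact le_max_right _ _

end Growth

theorem Differentiable.exists_polynomial_eq_of_norm_le {g : ℂ → ℂ} (hg : Differentiable ℂ g)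
    {C : ℝ} {n : ℕ} (hC : ∀ z, ‖g z‖ ≤ C * (1 + ‖z‖) ^ n) :
    ∃ p : ℂ[X], p.natDegree ≤ n ∧ ∀ z, g z = p.eval z := by
  induction n generalizing g C with
  | zero =>
    have hbdd : Bornology.IsBounded (Set.range g) := by
      refine isBounded_iff_forall_norm_le.2 ⟨C, ?_⟩
      rintro _ ⟨z, rfl⟩
      simpa using hC z
    obtain ⟨c, hc⟩ := hg.exists_const_forall_eq_of_bounded hbdd
    exact ⟨Polynomial.C c, by simp, fun z => by simp [hc z]⟩
  | succ n ih =>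
    obtain ⟨C', hC'⟩ := hg.exists_norm_dslope_le hC
    obtain ⟨p, hp, hpg⟩ := ih (differentiable_dslope hg 0) hC'
    refine ⟨Polynomial.C (g 0) + X * p, ?_, fun z => ?_⟩
    · refine (natDegree_add_le _ _).trans (max_le (by simp) ?_)
      exact natDegree_mul_le.trans (by rw [natDegree_X]; omega)
    · have := sub_smul_dslope g 0 z
      rw [sub_zero, smul_eq_mul, hpg] at this
      simp only [eval_add, eval_C, eval_mul, eval_X]
      linear_combination -this

theorem differentiableAt_complex_of_wirtDBar_eq_zero {g : ℂ → ℂ} {z : ℂ}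
    (hg : DifferentiableAt ℝ g z) (h : wirtDBar g z = 0) : DifferentiableAt ℂ g z := by
  refine differentiableAt_complex_iff_differentiableAt_real.2 ⟨hg, ?_⟩
  rw [wirtDBar, mul_eq_zero, or_iff_right (by norm_num)] at h
  rw [smul_eq_mul]
  linear_combination (-I) * h + fderiv ℝ g z I * I_sq

theorem one_add_norm_sq_eq_ofReal (z : ℂ) :
    (1 + ‖z‖ ^ 2 : ℂ) = ((1 + ‖z‖ ^ 2 : ℝ) : ℂ) := by
  push_cast; rfl

theorem differentiable_one_add_norm_sq :
    Differentiable ℝ fun z : ℂ => (1 + ‖z‖ ^ 2 : ℂ) := by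
  simp_rw [one_add_norm_sq_eq_ofReal]
  exact ofRealCLM.differentiable.comp
    ((differentiable_const 1).add (differentiable_id.norm_sq ℝ))

theorem norm_one_add_norm_sq (z : ℂ) : ‖(1 + ‖z‖ ^ 2 : ℂ)‖ = 1 + ‖z‖ ^ 2 := by
  rw [one_add_norm_sq_eq_ofReal, norm_real, Real.norm_of_nonneg (by positivity)]

theorem one_add_norm_sq_ne_zero (z : ℂ) : (1 + ‖z‖ ^ 2 : ℂ) ≠ 0 := by
  rw [one_add_norm_sq_eq_ofReal, ofReal_ne_zero]; positivity

theorem edth_eq_zero_iff {s : ℤ} {f : ℂ → ℂ} {z : ℂ} :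
    edth s f z = 0 ↔ wirtDBar (fun w => (1 + ‖w‖ ^ 2 : ℂ) ^ s * f w) z = 0 := by
  rw [edth, mul_eq_zero, or_iff_right]
  have : (Real.sqrt 2 : ℂ) ≠ 0 := by exact_mod_cast (Real.sqrt_pos.2 two_pos).ne'
  exact mul_ne_zero (inv_ne_zero this) (zpow_ne_zero _ (one_add_norm_sq_ne_zero z))

/-- A bounded `C¹` spin-weight-1 function on the sphere with `ð₁ f = 0` is a
combination of the three harmonics `₁Y_{1,m}`, `m = −1, 0, 1`. -/
theorem edth_one_kernel (f : ℂ → ℂ) (hf : ContDiff ℝ 1 f)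
    (hbd : ∃ M : ℝ, ∀ z : ℂ, ‖f z‖ ≤ M)
    (hker : ∀ z : ℂ, edth 1 f z = 0) :
    ∃ Bm1 B₀ B₁ : ℂ, ∀ z : ℂ,
      f z = (Bm1 + B₀ * z + B₁ * z ^ 2) / (1 + ‖z‖ ^ 2 : ℂ) := by
  obtain ⟨M, hM⟩ := hbd
  set g : ℂ → ℂ := fun w => (1 + ‖w‖ ^ 2 : ℂ) * f w with hg_def
  have hg : Differentiable ℂ g := fun z =>
    differentiableAt_complex_of_wirtDBar_eq_zero
      ((differentiable_one_add_norm_sq.mul (hf.differentiable one_ne_zero)) z)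
      (by simpa [edth_eq_zero_iff] using hker z)
  have hgrowth : ∀ z, ‖g z‖ ≤ M * (1 + ‖z‖) ^ 2 := fun z => by
    rw [hg_def, norm_mul, norm_one_add_norm_sq, mul_comm M]
    gcongr
    · nlinarith [norm_nonneg z]
    · exact hM z
  obtain ⟨p, hp, hpg⟩ := hg.exists_polynomial_eq_of_norm_le hgrowth
  refine ⟨p.coeff 0, p.coeff 1, p.coeff 2, fun z => ?_⟩
  rw [eq_div_iff (one_add_norm_sq_ne_zero z), mul_comm]
  change g z = _
  rw [hpg, eval_eq_sum_range' (by omega : p.natDegree < 3)]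
  simp [Finset.sum_range_succ]
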